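/- Let {(Z_λ, ρ_λ)}_{λ∈Λ} be an equicontinuous family of antipodal spaces and fix R > 0. For every ε > 0 there exists δ > 0 (depending only on R and ε) such that: for every antipodal space (Z, ρ_ω), every λ ∈ Λ, every δ-isometry h : (Z, ρ_ω) → (Z_λ, ρ_λ), and every antipodal function ρ on Z_λ that is Moebius equivalent to ρ_λ with ‖τ_ρ‖_∞ ≤ R (where τ_ρ = log(dρ/dρ_λ)), one has ‖D_{ρ_ω}(τ_ρ ∘ h)‖_∞ < ε. -/

import Mathlib

open Filter Topology Metric
open scoped ENNReal

universe u v

/-- A semi-metric (separating function) on a compact metrizable space: continuous, symmetric,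
nonnegative, and vanishing exactly on the diagonal. -/
def IsSemiMetric {Z : Type*} [TopologicalSpace Z] (ρ : Z → Z → ℝ) : Prop :=
  Continuous (Function.uncurry ρ) ∧ (∀ ξ η, ρ ξ η = ρ η ξ) ∧
    (∀ ξ η, 0 ≤ ρ ξ η) ∧ ∀ ξ η, ρ ξ η = 0 ↔ ξ = η

/-- An antipodal function: a semi-metric of diameter at most one such that every point has an
antipode at distance one. -/
def IsAntipodalFn {Z : Type*} [TopologicalSpace Z] (ρ : Z → Z → ℝ) : Prop :=
  IsSemiMetric ρ ∧ (∀ ξ η, ρ ξ η ≤ 1) ∧ ∀ ξ, ∃ η, ρ ξ η = 1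

/-- An `ε`-isometry between semi-metric spaces: distortion less than `ε`, and the image is an
`ε`-net. -/
def IsEpsIsometry {Z₁ : Type*} {Z₂ : Type*} (ρ₁ : Z₁ → Z₁ → ℝ) (ρ₂ : Z₂ → Z₂ → ℝ)
    (ε : ℝ) (f : Z₁ → Z₂) : Prop :=
  (∀ ξ η : Z₁, |ρ₂ (f ξ) (f η) - ρ₁ ξ η| < ε) ∧ ∀ ζ : Z₂, ∃ ξ : Z₁, ρ₂ (f ξ) ζ < ε

/-- An equicontinuous family of semi-metric spaces. -/
def EquicontinuousFamily {ι : Type*} {Z : ι → Type*} (ρ : ∀ i, Z i → Z i → ℝ) : Prop :=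
  ∀ ε : ℝ, 0 < ε → ∃ δ : ℝ, 0 < δ ∧ ∀ (i : ι) (ξ η : Z i), ρ i ξ η < δ →
    ∀ ζ : Z i, |ρ i ξ ζ - ρ i η ζ| < ε

/-- The discrepancy of a bounded function `τ` with respect to an antipodal function `ρ`:
`D_ρ(τ)(ξ) = sup_{η ≠ ξ} (τ ξ + τ η + 2 log ρ(ξ,η))`. -/
noncomputable def discrepancy {Z : Type*} (ρ : Z → Z → ℝ) (τ : Z → ℝ) : Z → ℝ :=
  fun ξ => sSup ((fun η => τ ξ + τ η + 2 * Real.log (ρ ξ η)) '' {η | η ≠ ξ})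

/-! If `β = e^τ ρ` is an antipodal Moebius rescaling of `ρ` with `τ ≤ R`, then
`τ x + τ y + 2 log ρ(x,y) = 2 log β(x,y) ≤ 0`, with equality at a `β`-antipode `y` of `x`, where
moreover `ρ(x,y) ≥ e^{-R}`. Transporting through a `δ`-isometry `h` and using that `log` is
Lipschitz away from `0`, the discrepancy terms of `τ ∘ h` are at most `O(δ)`: pairs at
`ρ`-distance below `e^{-R}` contribute nonpositive terms anyway. For the lower bound, pick a point
`h η` close to a `β`-antipode of `h ξ`: equicontinuity makes `ρ` and, through the Moebius
relation at a further antipode, also `τ` almost unchanged, so the term at `η` is almost `0`. -/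

open Real

lemma log_sub_log_le_div_of_sub_le {a b m d : ℝ} (ha : 0 < a) (hm : 0 < m) (hmb : m ≤ b)
    (hd : a - b ≤ d) (hd0 : 0 ≤ d) : log a - log b ≤ d / m := by
  have hb : 0 < b := hm.trans_le hmb
  calc log a - log b = log (a / b) := (log_div ha.ne' hb.ne').symm
    _ ≤ a / b - 1 := log_le_sub_one_of_pos (div_pos ha hb)
    _ = (a - b) / b := by field_simp
    _ ≤ d / b := by gcongr
    _ ≤ d / m := by gcongr

lemma two_mul_log_eq_of_sq_eq {b r s t : ℝ} (hr : r ≠ 0) (h : b ^ 2 = exp s * exp t * r ^ 2) :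
    2 * log b = s + t + 2 * log r := by
  have hlog := congrArg log h
  rw [log_mul (by positivity) (pow_ne_zero 2 hr), log_mul (exp_ne_zero s) (exp_ne_zero t),
    log_exp, log_exp, log_pow, log_pow] at hlog
  push_cast at hlog
  linarith

/-- `τ = log (dβ/dρ)` in the notation of Moebius equivalence. -/
def IsLogMoebiusDerivative {Y : Type*} (ρ β : Y → Y → ℝ) (τ : Y → ℝ) : Prop :=
  ∀ x y, β x y ^ 2 = exp (τ x) * exp (τ y) * ρ x y ^ 2

section MoebiusRescaling

variable {Y : Type*} {ρ β : Y → Y → ℝ} {τ : Y → ℝ} {R : ℝ}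

lemma add_add_two_mul_log_nonpos (hβ0 : ∀ x y, 0 ≤ β x y) (hβ1 : ∀ x y, β x y ≤ 1)
    (hτ : IsLogMoebiusDerivative ρ β τ) {x y : Y} (hxy : ρ x y ≠ 0) :
    τ x + τ y + 2 * log (ρ x y) ≤ 0 := by
  rw [← two_mul_log_eq_of_sq_eq hxy (hτ x y)]
  linarith [log_nonpos (hβ0 x y) (hβ1 x y)]

lemma exp_neg_le_and_add_add_two_mul_log_eq_zero (hρ0 : ∀ x y, 0 ≤ ρ x y)
    (hτ : IsLogMoebiusDerivative ρ β τ) (hτR : ∀ x, τ x ≤ R) {x y : Y} (hxy : β x y = 1) :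
    exp (-R) ≤ ρ x y ∧ τ x + τ y + 2 * log (ρ x y) = 0 := by
  have hmoeb := hτ x y
  rw [hxy] at hmoeb
  have hne : ρ x y ≠ 0 := by
    rintro h0
    simp [h0] at hmoeb
  have hzero := two_mul_log_eq_of_sq_eq hne hmoeb
  rw [log_one, mul_zero] at hzero
  refine ⟨?_, hzero.symm⟩
  rw [← le_log_iff_exp_le ((hρ0 x y).lt_of_ne' hne)]
  linarith [hτR x, hτR y]

lemma sub_le_of_forall_abs_sub_lt (hρ0 : ∀ x y, 0 ≤ ρ x y) (hβ0 : ∀ x y, 0 ≤ β x y)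
    (hβ1 : ∀ x y, β x y ≤ 1) (hant : ∀ x, ∃ y, β x y = 1) (hτ : IsLogMoebiusDerivative ρ β τ)
    (hτR : ∀ x, τ x ≤ R) {ε : ℝ} (hε : ε ≤ exp (-R) / 2) {y z : Y}
    (hyz : ∀ w, |ρ y w - ρ z w| < ε) : τ z - τ y ≤ 4 * ε / exp (-R) := by
  obtain ⟨σ, hσ⟩ := hant y
  obtain ⟨hyσ, hzero⟩ := exp_neg_le_and_add_add_two_mul_log_eq_zero hρ0 hτ hτR hσ
  have hclose := abs_lt.1 (hyz σ)
  have hzσ : exp (-R) / 2 ≤ ρ z σ := by linarith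
  have hc := exp_pos (-R)
  have hnonpos := add_add_two_mul_log_nonpos hβ0 hβ1 hτ (x := z) (y := σ)
    (by linarith : 0 < ρ z σ).ne'
  have hlog := log_sub_log_le_div_of_sub_le (by linarith) (by positivity) hzσ hclose.2.le
    ((abs_nonneg _).trans (hyz σ).le)
  have hdiv : 2 * (ε / (exp (-R) / 2)) = 4 * ε / exp (-R) := by ring
  linarith


lemma add_add_two_mul_log_le_of_abs_sub_lt (hβ0 : ∀ x y, 0 ≤ β x y) (hβ1 : ∀ x y, β x y ≤ 1)
    (hτ : IsLogMoebiusDerivative ρ β τ) (hτR : ∀ x, τ x ≤ R) {δ r : ℝ}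
    (hδ : δ ≤ exp (-R) / 2) (hr : 0 < r) {x y : Y} (hxy : |ρ x y - r| < δ) :
    τ x + τ y + 2 * log r ≤ 4 * δ / exp (-R) := by
  have hδ0 : 0 ≤ δ := (abs_nonneg _).trans hxy.le
  rcases lt_or_ge r (exp (-R)) with hsmall | hlarge
  · have hlog : log r ≤ -R := by
      simpa only [log_exp] using log_le_log hr hsmall.le
    have : 0 ≤ 4 * δ / exp (-R) := by positivity
    linarith [hτR x, hτR y]
  · have hclose := abs_lt.1 hxy
    have hxy' : exp (-R) / 2 ≤ ρ x y := by linarith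
    have hc := exp_pos (-R)
    have hnonpos := add_add_two_mul_log_nonpos hβ0 hβ1 hτ (by linarith : 0 < ρ x y).ne'
    have hlog := log_sub_log_le_div_of_sub_le hr (by positivity) hxy' (by linarith) hδ0
    have hdiv : 2 * (δ / (exp (-R) / 2)) = 4 * δ / exp (-R) := by ring
    linarith

lemma neg_le_add_add_two_mul_log_of_antipode (hρ : ∀ x y, ρ x y = ρ y x)
    (hρ0 : ∀ x y, 0 ≤ ρ x y) (hβ0 : ∀ x y, 0 ≤ β x y) (hβ1 : ∀ x y, β x y ≤ 1)
    (hant : ∀ x, ∃ y, β x y = 1) (hτ : IsLogMoebiusDerivative ρ β τ) (hτR : ∀ x, τ x ≤ R)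
    {ε δ r : ℝ} (hε : ε ≤ exp (-R) / 4) (hδ : δ ≤ exp (-R) / 4) {x ζ z : Y}
    (hxζ : β x ζ = 1) (hzζ : ∀ w, |ρ z w - ρ ζ w| < ε) (hr : |ρ x z - r| < δ) :
    0 < r ∧ -((8 * ε + 4 * δ) / exp (-R)) ≤ τ x + τ z + 2 * log r := by
  obtain ⟨hxζ_ge, hzero⟩ := exp_neg_le_and_add_add_two_mul_log_eq_zero hρ0 hτ hτR hxζ
  have hτζ := sub_le_of_forall_abs_sub_lt hρ0 hβ0 hβ1 hant hτ hτR
    (hε.trans (by linarith [exp_pos (-R)])) hzζ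
  have hxz := abs_lt.1 (hzζ x)
  rw [hρ z x, hρ ζ x] at hxz
  have hr' := abs_lt.1 hr
  have hrc : exp (-R) / 2 ≤ r := by linarith
  have hε0 : 0 ≤ ε := (abs_nonneg _).trans (hzζ x).le
  have hδ0 : 0 ≤ δ := (abs_nonneg _).trans hr.le
  have hc := exp_pos (-R)
  have hlog := log_sub_log_le_div_of_sub_le (by linarith) (by positivity) hrc
    (by linarith : ρ x ζ - r ≤ ε + δ) (by positivity)
  have hdiv : (8 * ε + 4 * δ) / exp (-R) = 4 * ε / exp (-R) + 2 * ((ε + δ) / (exp (-R) / 2)) := by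
    field_simp
    ring
  exact ⟨by linarith, by linarith⟩

end MoebiusRescaling

lemma abs_discrepancy_le {X : Type*} {ρ : X → X → ℝ} {f : X → ℝ} {ξ : X} {a : ℝ}
    (hupper : ∀ η, η ≠ ξ → f ξ + f η + 2 * log (ρ ξ η) ≤ a)
    (hlower : ∃ η, η ≠ ξ ∧ -a ≤ f ξ + f η + 2 * log (ρ ξ η)) :
    |discrepancy ρ f ξ| ≤ a := by
  obtain ⟨η, hne, hη⟩ := hlower
  have hbdd : a ∈ upperBounds ((fun η => f ξ + f η + 2 * log (ρ ξ η)) '' {η | η ≠ ξ}) :=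
    Set.forall_mem_image.2 hupper
  rw [abs_le]
  exact ⟨hη.trans (le_csSup ⟨a, hbdd⟩ ⟨η, hne, rfl⟩), csSup_le ⟨_, η, hne, rfl⟩ hbdd⟩

lemma abs_discrepancy_comp_le {X Y : Type*} {ρX : X → X → ℝ} {ρ β : Y → Y → ℝ} {τ : Y → ℝ}
    {R ε δ : ℝ} (hρX0 : ∀ ξ η, 0 ≤ ρX ξ η) (hρX : ∀ ξ η, ρX ξ η = 0 ↔ ξ = η)
    (hρ : ∀ x y, ρ x y = ρ y x) (hρ0 : ∀ x y, 0 ≤ ρ x y) (hβ0 : ∀ x y, 0 ≤ β x y)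
    (hβ1 : ∀ x y, β x y ≤ 1) (hant : ∀ x, ∃ y, β x y = 1) (hτ : IsLogMoebiusDerivative ρ β τ)
    (hτR : ∀ x, τ x ≤ R) (hequi : ∀ x y, ρ x y < δ → ∀ z, |ρ x z - ρ y z| < ε)
    (hε : ε ≤ exp (-R) / 4) (hδ : δ ≤ exp (-R) / 4) {h : X → Y}
    (hh : IsEpsIsometry ρX ρ δ h) (ξ : X) :
    |discrepancy ρX (fun ζ => τ (h ζ)) ξ| ≤ (8 * ε + 4 * δ) / exp (-R) := by
  obtain ⟨hdist, hnet⟩ := hh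
  obtain ⟨ζ, hζ⟩ := hant (h ξ)
  obtain ⟨η, hη⟩ := hnet ζ
  have hclose := hequi _ _ hη
  obtain ⟨hpos, hlower⟩ := neg_le_add_add_two_mul_log_of_antipode hρ hρ0 hβ0 hβ1 hant hτ hτR hε hδ
    hζ hclose (hdist ξ η)
  have hε0 : 0 ≤ ε := (abs_nonneg _).trans (hclose ζ).le
  refine abs_discrepancy_le (fun η' hne => ?_) ⟨η, fun he => ?_, hlower⟩
  · have hpos' : 0 < ρX ξ η' := (hρX0 ξ η').lt_of_ne' fun h0 => hne ((hρX ξ η').1 h0).symm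
    calc _ ≤ 4 * δ / exp (-R) := add_add_two_mul_log_le_of_abs_sub_lt hβ0 hβ1 hτ hτR
            (hδ.trans (by linarith [exp_pos (-R)])) hpos' (hdist ξ η')
      _ ≤ (8 * ε + 4 * δ) / exp (-R) := by gcongr; linarith
  · rw [he, (hρX ξ ξ).2 rfl] at hpos
    exact lt_irrefl _ hpos

theorem discrepancy_small_along_rough_isometries
    {Λ : Type v} {Z : Λ → Type u} [∀ l, TopologicalSpace (Z l)]
    (ρ : ∀ l, Z l → Z l → ℝ) (hρ : ∀ l, IsAntipodalFn (ρ l))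
    (hEq : EquicontinuousFamily ρ)
    (R : ℝ) :
    ∀ ε : ℝ, 0 < ε → ∃ δ : ℝ, 0 < δ ∧
      ∀ (Zω : Type u) (tω : TopologicalSpace Zω) (_ : @CompactSpace Zω tω)
        (_ : @TopologicalSpace.MetrizableSpace Zω tω) (ρω : Zω → Zω → ℝ),
        @IsAntipodalFn Zω tω ρω →
        ∀ (l : Λ) (h : Zω → Z l), IsEpsIsometry ρω (ρ l) δ h →
          ∀ (β : Z l → Z l → ℝ), IsAntipodalFn β →
            ∀ τ : Z l → ℝ, Continuous τ →
              (∀ ξ η : Z l, β ξ η ^ 2 = Real.exp (τ ξ) * Real.exp (τ η) * ρ l ξ η ^ 2) →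
              (∀ ξ : Z l, |τ ξ| ≤ R) →
              (⨆ ξ : Zω, |discrepancy ρω (fun ζ => τ (h ζ)) ξ|) < ε := by
  intro ε hε
  set c := exp (-R)
  have hc : 0 < c := exp_pos _
  set ε' := min (c / 4) (c * ε / 32)
  obtain ⟨δ₁, hδ₁, hequi⟩ := hEq ε' (by positivity)
  set δ := min δ₁ (min (c / 4) (c * ε / 16))
  refine ⟨δ, by positivity, ?_⟩
  intro Zω tω _ _ ρω ⟨⟨_, _, hρω0, hρω⟩, _⟩ l h hh β ⟨⟨_, _, hβ0, _⟩, hβ1, hant⟩ τ _ hτ hτR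
  obtain ⟨⟨_, hρ_symm, hρ0, _⟩, _⟩ := hρ l
  have hbound := abs_discrepancy_comp_le hρω0 hρω hρ_symm hρ0 hβ0 hβ1 hant hτ
    (fun x => (abs_le.1 (hτR x)).2) (fun x y hxy => hequi l x y (hxy.trans_le (min_le_left _ _)))
    (min_le_left _ _) ((min_le_right _ _).trans (min_le_left _ _)) hh
  have hconst : (8 * ε' + 4 * δ) / c ≤ ε / 2 := by
    rw [div_le_iff₀ hc]
    linarith [min_le_right (c / 4) (c * ε / 32),
      (min_le_right δ₁ _).trans (min_le_right (c / 4) (c * ε / 16))]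
  exact (Real.iSup_le (fun ξ => (hbound ξ).trans hconst) (by positivity)).trans_lt (by linarith)
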